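/- arXiv:1612.08463 — 4 statements merged into one kernel-verified Lean document; each statement's English description precedes it below -/
import Mathlib

section
/- Let A be a simple, undirected, connected graph on vertex set {1,…,n} with n > 1, and let P₁, P₂, … be an infinite sequence of primitive gossip matrices associated with A which is repetitively complete with period T. Then there exists a real number λ with 0 ≤ λ < 1, depending only on T and the matrices Pₜ, such that for every initial vector x(0) ∈ ℝⁿ the products Pₜ P_{t−1} ⋯ P₁ x(0) converge, as t → ∞, to y_avg·𝟙 (the constant vector whose every entry is y_avg = (1/n)·Σᵢ xᵢ(0)), and the convergence is exponentially fast: there is a constant C such that ‖Pₜ P_{t−1} ⋯ P₁ x(0) − y_avg·𝟙‖ ≤ C·λᵗ for all t. -/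
open Matrix

/-- The neighborhood averaging (primitive gossip) matrix of a subset `L` of `{1,…,n}`:
entries `1/|L|` for `j, k ∈ L`, `1` on the diagonal for `j ∉ L`, and `0` elsewhere. -/
noncomputable def gossipMatrix (n : ℕ) (L : Finset (Fin n)) : Matrix (Fin n) (Fin n) ℝ :=
  Matrix.of fun j k => if j ∈ L ∧ k ∈ L then ((L.card : ℝ))⁻¹ else if j = k then 1 else 0

/-- `L` is a neighborhood of the graph `A`: a set of at least two vertices, every two
distinct elements of which are adjacent in `A` (a clique of size at least 2). -/
def IsNeighborhood {n : ℕ} (A : SimpleGraph (Fin n)) (L : Finset (Fin n)) : Prop :=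
  2 ≤ L.card ∧ ∀ i ∈ L, ∀ j ∈ L, i ≠ j → A.Adj i j

/-- The graph induced by a list `Ls` of neighborhoods: its edges are the pairs `{i,j}`
of distinct vertices lying in a common member of `Ls`. -/
def inducedGraph {n : ℕ} (Ls : List (Finset (Fin n))) : SimpleGraph (Fin n) :=
  SimpleGraph.fromRel (fun i j => ∃ L ∈ Ls, i ∈ L ∧ j ∈ L)

/-- The backward product `P_{t-1} ⋯ P_1 P_0` of the first `t` matrices of a sequence. -/
noncomputable def backProd {n : ℕ} (P : ℕ → Matrix (Fin n) (Fin n) ℝ) :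
    ℕ → Matrix (Fin n) (Fin n) ℝ
  | 0 => 1
  | t + 1 => P t * backProd P t

open Filter Topology Pointwise

/-!
Each neighborhood averaging matrix is the orthogonal projection onto the vectors that are
constant on the neighborhood, hence a paracontraction for the Euclidean norm: it never increases
the norm, and decreases it strictly unless it fixes the vector. A product of paracontractions is
again one, and its fixed vectors are the common fixed vectors of the factors. Over a window of
`T` steps these are the vectors constant along a connected graph, i.e. the multiples of `𝟙`, so
every window product strictly shrinks the nonzero zero-sum vectors. Only finitely many window
products occur, and compactness of the unit sphere turns this into one factor `c < 1` valid for
all windows. The deviation from the average is a zero-sum vector, which the doubly stochastic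
products keep zero-sum, so its Euclidean norm shrinks by `√c` every `T` steps.
-/

section DotProduct

variable {ι : Type*} [Fintype ι]

theorem dotProduct_self_nonneg (x : ι → ℝ) : 0 ≤ x ⬝ᵥ x :=
  Finset.sum_nonneg fun i _ => mul_self_nonneg (x i)

theorem norm_le_sqrt_dotProduct_self (x : ι → ℝ) : ‖x‖ ≤ √(x ⬝ᵥ x) :=
  (pi_norm_le_iff_of_nonneg (Real.sqrt_nonneg _)).2 fun i => Real.abs_le_sqrt <|
    (sq (x i)).trans_le <| Finset.single_le_sum (f := fun j => x j * x j)
      (fun j _ => mul_self_nonneg (x j)) (Finset.mem_univ i)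

theorem eventually_forall_dotProduct_mulVec_le_mul (M : Matrix ι ι ℝ) (V : Submodule ℝ (ι → ℝ))
    (h : ∀ x ∈ V, x ≠ 0 → (M *ᵥ x) ⬝ᵥ (M *ᵥ x) < x ⬝ᵥ x) :
    ∀ᶠ κ in 𝓝[<] 1, ∀ x ∈ V, (M *ᵥ x) ⬝ᵥ (M *ᵥ x) ≤ κ * (x ⬝ᵥ x) := by
  set K : Set (ι → ℝ) := V ∩ {x | x ⬝ᵥ x ≤ 1}
  have hK : IsCompact K := by
    refine Metric.isCompact_of_isClosed_isBounded
      (V.closed_of_finiteDimensional.inter (isClosed_le (by fun_prop) continuous_const))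
      ((Metric.isBounded_closedBall (x := 0) (r := 1)).subset fun x hx => ?_)
    rw [mem_closedBall_zero_iff]
    exact (norm_le_sqrt_dotProduct_self x).trans (Real.sqrt_le_one.2 hx.2)
  obtain ⟨x₀, hx₀, hmax⟩ := hK.exists_isMaxOn ⟨0, V.zero_mem, by simp⟩
    (by fun_prop : Continuous fun x => (M *ᵥ x) ⬝ᵥ (M *ᵥ x)).continuousOn
  have hlt : (M *ᵥ x₀) ⬝ᵥ (M *ᵥ x₀) < 1 := by
    rcases eq_or_ne x₀ 0 with rfl | hne
    · simp
    · exact (h x₀ hx₀.1 hne).trans_le hx₀.2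
  filter_upwards [Ico_mem_nhdsLT hlt] with κ hκ x hx
  rcases eq_or_ne x 0 with rfl | hne
  · simp
  have hpos : 0 < x ⬝ᵥ x :=
    (dotProduct_self_nonneg x).lt_of_ne' (dotProduct_self_eq_zero.not.2 hne)
  -- rescale `x` onto the unit sphere, where the maximum at `x₀` applies
  set c := (√(x ⬝ᵥ x))⁻¹
  have hc : c * c * (x ⬝ᵥ x) = 1 := by
    rw [← mul_inv, Real.mul_self_sqrt hpos.le, inv_mul_cancel₀ hpos.ne']
  have hcx : c * c * ((M *ᵥ x) ⬝ᵥ (M *ᵥ x)) ≤ (M *ᵥ x₀) ⬝ᵥ (M *ᵥ x₀) := by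
    simpa [mulVec_smul, smul_dotProduct, dotProduct_smul, ← mul_assoc] using
      hmax ⟨V.smul_mem c hx, by simp [smul_dotProduct, dotProduct_smul, ← mul_assoc, hc]⟩
  calc (M *ᵥ x) ⬝ᵥ (M *ᵥ x) = (c * c * ((M *ᵥ x) ⬝ᵥ (M *ᵥ x))) * (x ⬝ᵥ x) := by
        linear_combination (-((M *ᵥ x) ⬝ᵥ (M *ᵥ x))) * hc
    _ ≤ κ * (x ⬝ᵥ x) := by gcongr; exact hcx.trans hκ.1

theorem exists_forall_dotProduct_mulVec_le_mul {κ : Type*}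
    {M : κ → Matrix ι ι ℝ} (hM : (Set.range M).Finite) (V : Submodule ℝ (ι → ℝ))
    (h : ∀ i, ∀ x ∈ V, x ≠ 0 → (M i *ᵥ x) ⬝ᵥ (M i *ᵥ x) < x ⬝ᵥ x) :
    ∃ c, 0 < c ∧ c < 1 ∧ ∀ i, ∀ x ∈ V, (M i *ᵥ x) ⬝ᵥ (M i *ᵥ x) ≤ c * (x ⬝ᵥ x) := by
  have hall : ∀ᶠ c in 𝓝[<] 1, ∀ N ∈ Set.range M, ∀ x ∈ V, (N *ᵥ x) ⬝ᵥ (N *ᵥ x) ≤ c * (x ⬝ᵥ x) :=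
    (eventually_all_finite hM).2 <| by
      rintro _ ⟨i, rfl⟩
      exact eventually_forall_dotProduct_mulVec_le_mul (M i) V (h i)
  obtain ⟨c, hc, ⟨hc0, hc1⟩⟩ := (hall.and (Ioo_mem_nhdsLT one_pos)).exists
  exact ⟨c, hc0, hc1, fun i => hc (M i) ⟨i, rfl⟩⟩

end DotProduct

section Paracontraction

variable {ι : Type*} [Fintype ι] [DecidableEq ι]

variable (ι) in
def paracontractions : Submonoid (Matrix ι ι ℝ) where
  carrier := {M | ∀ x, (M *ᵥ x) ⬝ᵥ (M *ᵥ x) ≤ x ⬝ᵥ x ∧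
    (M *ᵥ x ≠ x → (M *ᵥ x) ⬝ᵥ (M *ᵥ x) < x ⬝ᵥ x)}
  one_mem' x := by simp
  mul_mem' {M N} hM hN x := by
    rw [← mulVec_mulVec]
    refine ⟨(hM _).1.trans (hN x).1, fun hMNx => ?_⟩
    by_cases hNx : N *ᵥ x = x
    · rw [hNx] at hMNx ⊢
      exact (hM x).2 hMNx
    · exact (hM _).1.trans_lt ((hN x).2 hNx)

theorem mul_mulVec_eq_self_iff {M N : Matrix ι ι ℝ} (hM : M ∈ paracontractions ι)
    (hN : N ∈ paracontractions ι) {x : ι → ℝ} :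
    (M * N) *ᵥ x = x ↔ M *ᵥ x = x ∧ N *ᵥ x = x := by
  rw [← mulVec_mulVec]
  refine ⟨fun h => ?_, fun ⟨hMx, hNx⟩ => by rw [hNx, hMx]⟩
  have hNx : N *ᵥ x = x := by
    by_contra hNx
    exact lt_irrefl _ (h ▸ (hM _).1.trans_lt ((hN x).2 hNx))
  rw [hNx] at h
  exact ⟨h, hNx⟩

theorem list_prod_mulVec_eq_self_iff {l : List (Matrix ι ι ℝ)}
    (hl : ∀ M ∈ l, M ∈ paracontractions ι) {x : ι → ℝ} :
    l.prod *ᵥ x = x ↔ ∀ M ∈ l, M *ᵥ x = x := by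
  induction l with
  | nil => simp
  | cons M l ih =>
    simp only [List.forall_mem_cons] at hl ⊢
    rw [List.prod_cons, mul_mulVec_eq_self_iff hl.1 ((paracontractions ι).list_prod_mem hl.2),
      ih hl.2]

theorem Matrix.IsSymm.mem_paracontractions {M : Matrix ι ι ℝ} (hsymm : M.IsSymm)
    (hidem : IsIdempotentElem M) : M ∈ paracontractions ι := by
  intro x
  have hMM : (M *ᵥ x) ⬝ᵥ (M *ᵥ x) = (M *ᵥ x) ⬝ᵥ x := by
    rw [dotProduct_mulVec, ← mulVec_transpose, hsymm.eq, mulVec_mulVec, hidem.eq]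
  have pythagoras : x ⬝ᵥ x = (M *ᵥ x) ⬝ᵥ (M *ᵥ x) + (x - M *ᵥ x) ⬝ᵥ (x - M *ᵥ x) := by
    simp only [sub_dotProduct, dotProduct_sub, dotProduct_comm x (M *ᵥ x)]
    linarith
  refine ⟨by linarith [dotProduct_self_nonneg (x - M *ᵥ x)], fun hx => ?_⟩
  have : 0 < (x - M *ᵥ x) ⬝ᵥ (x - M *ᵥ x) :=
    (dotProduct_self_nonneg _).lt_of_ne' (dotProduct_self_eq_zero.not.2 (sub_ne_zero.2 hx.symm))
  linarith

end Paracontraction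

theorem le_geometric_of_antitone_of_le_mul {u : ℕ → ℝ} (hu : Antitone u) (hu0 : 0 ≤ u 0)
    {T : ℕ} (hT : 0 < T) {c : ℝ} (hc0 : 0 < c) (hc1 : c ≤ 1) (hper : ∀ t, u (t + T) ≤ c * u t)
    (t : ℕ) : u t ≤ u 0 / c * (c ^ (T : ℝ)⁻¹) ^ t := by
  have hwindows : ∀ q, u (T * q) ≤ c ^ q * u 0 := by
    intro q
    induction q with
    | zero => simp
    | succ q ih =>
      calc u (T * (q + 1)) = u (T * q + T) := by rw [mul_add_one]
        _ ≤ c * u (T * q) := hper _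
        _ ≤ c * (c ^ q * u 0) := by gcongr
        _ = c ^ (q + 1) * u 0 := by ring
  have hexp : (t : ℝ) / T - 1 ≤ (t / T : ℕ) := by
    rw [sub_le_iff_le_add, div_le_iff₀ (by positivity)]
    exact_mod_cast (mul_comm T _ ▸ (Nat.lt_mul_div_succ t hT).le)
  calc u t ≤ u (T * (t / T)) := hu (Nat.mul_div_le t T)
    _ ≤ c ^ (t / T) * u 0 := hwindows _
    _ ≤ c ^ ((t : ℝ) / T - 1) * u 0 := by
      rw [← Real.rpow_natCast]
      exact mul_le_mul_of_nonneg_right (Real.rpow_le_rpow_of_exponent_ge hc0 hc1 hexp) hu0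
    _ = u 0 / c * (c ^ (T : ℝ)⁻¹) ^ t := by
      rw [Real.rpow_sub hc0, Real.rpow_one, ← Real.rpow_natCast, ← Real.rpow_mul hc0.le]
      ring_nf

theorem SimpleGraph.Preconnected.apply_eq_of_forall_adj {V β : Type*} {G : SimpleGraph V}
    (hG : G.Preconnected) {f : V → β} (hf : ∀ u v, G.Adj u v → f u = f v) (u v : V) :
    f u = f v := by
  obtain ⟨w⟩ := hG u v
  induction w with
  | nil => rfl
  | cons hadj _ ih => exact (hf _ _ hadj).trans ih

theorem Set.Finite.pow {M : Type*} [Monoid M] {s : Set M} (hs : s.Finite) (k : ℕ) :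
    (s ^ k).Finite := by
  induction k with
  | zero => simp
  | succ k ih => rw [pow_succ]; exact ih.mul hs

theorem eq_zero_of_sum_eq_zero_of_forall_eq {ι : Type*} [Fintype ι] {x : ι → ℝ}
    (hsum : ∑ i, x i = 0) (hconst : ∀ i j, x i = x j) : x = 0 := by
  funext i
  have hcard : Fintype.card ι * x i = 0 := by
    rw [← hsum, Finset.sum_congr rfl fun j _ => hconst j i, Finset.sum_const, Finset.card_univ,
      nsmul_eq_mul]
  have : Nonempty ι := ⟨i⟩
  exact (mul_eq_zero.1 hcard).resolve_left (Nat.cast_ne_zero.2 Fintype.card_ne_zero)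

theorem sum_sub_mean_eq_zero {n : ℕ} (x : Fin n → ℝ) :
    ∑ i, (x - fun _ : Fin n => (∑ j, x j) / (n : ℝ)) i = 0 := by
  rcases Nat.eq_zero_or_pos n with rfl | hn
  · simp
  · simp only [Pi.sub_apply, Finset.sum_sub_distrib, Finset.sum_const, Finset.card_univ,
      Fintype.card_fin, nsmul_eq_mul]
    field_simp
    ring

theorem mulVec_const_of_mem_doublyStochastic {ι : Type*} [Fintype ι] [DecidableEq ι]
    {M : Matrix ι ι ℝ} (hM : M ∈ doublyStochastic ℝ ι) (c : ℝ) :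
    M *ᵥ (fun _ => c) = fun _ => c := by
  have hc : (fun _ : ι => c) = c • 1 := by
    funext
    simp
  rw [hc, mulVec_smul, mulVec_one_of_mem_doublyStochastic hM]

section Gossip

variable {n : ℕ}

theorem gossipMatrix_mulVec_apply (L : Finset (Fin n)) (x : Fin n → ℝ) (j : Fin n) :
    (gossipMatrix n L *ᵥ x) j = if j ∈ L then (∑ k ∈ L, x k) / L.card else x j := by
  by_cases hj : j ∈ L
  · simp [gossipMatrix, mulVec, dotProduct, hj, Finset.sum_ite, Finset.mul_sum, div_eq_inv_mul]
  · simp [gossipMatrix, mulVec, dotProduct, hj]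

theorem gossipMatrix_isSymm (L : Finset (Fin n)) : (gossipMatrix n L).IsSymm := by
  ext j k
  simp only [gossipMatrix, transpose_apply, of_apply, and_comm, eq_comm]

theorem gossipMatrix_mulVec_eq_self_iff {L : Finset (Fin n)} {x : Fin n → ℝ} :
    gossipMatrix n L *ᵥ x = x ↔ ∀ j ∈ L, ∀ k ∈ L, x j = x k := by
  constructor
  · intro h j hj k hk
    have hmean : ∀ i ∈ L, x i = (∑ k ∈ L, x k) / L.card := fun i hi => by
      rw [← congrFun h i, gossipMatrix_mulVec_apply, if_pos hi]
    rw [hmean j hj, hmean k hk]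
  · intro h
    funext j
    rw [gossipMatrix_mulVec_apply]
    split_ifs with hj
    · rw [Finset.sum_congr rfl fun k hk => h k hk j hj, Finset.sum_const, nsmul_eq_mul,
        mul_div_cancel_left₀ _ (Nat.cast_ne_zero.2 (Finset.card_ne_zero_of_mem hj))]
    · rfl

theorem isIdempotentElem_gossipMatrix (L : Finset (Fin n)) :
    IsIdempotentElem (gossipMatrix n L) := by
  refine ext_iff_mulVec.2 fun x => ?_
  rw [← mulVec_mulVec, gossipMatrix_mulVec_eq_self_iff]
  intro j hj k hk
  simp only [gossipMatrix_mulVec_apply, if_pos hj, if_pos hk]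

theorem gossipMatrix_mem_paracontractions (L : Finset (Fin n)) :
    gossipMatrix n L ∈ paracontractions (Fin n) :=
  (gossipMatrix_isSymm L).mem_paracontractions (isIdempotentElem_gossipMatrix L)

theorem gossipMatrix_mem_doublyStochastic (L : Finset (Fin n)) :
    gossipMatrix n L ∈ doublyStochastic ℝ (Fin n) := by
  have hone : gossipMatrix n L *ᵥ 1 = 1 := gossipMatrix_mulVec_eq_self_iff.2 fun _ _ _ _ => rfl
  refine mem_doublyStochastic.2 ⟨fun j k => ?_, hone, ?_⟩
  · simp only [gossipMatrix, of_apply]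
    split_ifs <;> positivity
  · rw [← mulVec_transpose, (gossipMatrix_isSymm L).eq, hone]

end Gossip

section BackProd

variable {n : ℕ}

theorem backProd_add (f : ℕ → Matrix (Fin n) (Fin n) ℝ) (a k : ℕ) :
    backProd f (a + k) = backProd (fun i => f (a + i)) k * backProd f a := by
  induction k with
  | zero => simp [backProd]
  | succ k ih => rw [← add_assoc, backProd, ih, backProd, Matrix.mul_assoc]

theorem backProd_mem_pow {S : Set (Matrix (Fin n) (Fin n) ℝ)}
    {f : ℕ → Matrix (Fin n) (Fin n) ℝ} {k : ℕ} (hf : ∀ i < k, f i ∈ S) : backProd f k ∈ S ^ k := by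
  induction k with
  | zero => exact Set.mem_one.2 rfl
  | succ k ih =>
    rw [Nat.forall_lt_succ_right] at hf
    rw [pow_succ']
    exact Set.mul_mem_mul hf.2 (ih hf.1)

theorem backProd_mem {S : Submonoid (Matrix (Fin n) (Fin n) ℝ)}
    {f : ℕ → Matrix (Fin n) (Fin n) ℝ} {k : ℕ} (hf : ∀ i < k, f i ∈ S) : backProd f k ∈ S :=
  Submonoid.pow_subset subset_rfl (backProd_mem_pow hf)

theorem backProd_mulVec_eq_self_iff {f : ℕ → Matrix (Fin n) (Fin n) ℝ} {k : ℕ}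
    (hf : ∀ i < k, f i ∈ paracontractions (Fin n)) {x : Fin n → ℝ} :
    backProd f k *ᵥ x = x ↔ ∀ i < k, f i *ᵥ x = x := by
  induction k with
  | zero => simp [backProd]
  | succ k ih =>
    rw [Nat.forall_lt_succ_right] at hf ⊢
    rw [backProd, mul_mulVec_eq_self_iff hf.2 (backProd_mem hf.1), ih hf.1, and_comm]

end BackProd

section GossipProducts

variable {n : ℕ}

theorem list_prod_gossipMatrix_mem (l : List (Finset (Fin n))) :
    (l.map (gossipMatrix n)).prod ∈ paracontractions (Fin n) ⊓ doublyStochastic ℝ (Fin n) :=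
  Submonoid.list_prod_mem _ <| by
    simpa using fun L _ =>
      ⟨gossipMatrix_mem_paracontractions L, gossipMatrix_mem_doublyStochastic L⟩

theorem list_prod_gossipMatrix_mulVec_eq_self_iff {l : List (Finset (Fin n))} {x : Fin n → ℝ} :
    (l.map (gossipMatrix n)).prod *ᵥ x = x ↔ ∀ L ∈ l, ∀ j ∈ L, ∀ k ∈ L, x j = x k := by
  rw [list_prod_mulVec_eq_self_iff (by simpa using fun L _ => gossipMatrix_mem_paracontractions L)]
  simp only [List.forall_mem_map, gossipMatrix_mulVec_eq_self_iff]

theorem finite_range_list_prod_gossipMatrix {α : Type*} (Ls : α → List (Finset (Fin n)))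
    (hne : ∀ a, ∀ L ∈ Ls a, L.Nonempty) (hdisj : ∀ a, (Ls a).Pairwise Disjoint) :
    (Set.range fun a => ((Ls a).map (gossipMatrix n)).prod).Finite := by
  have hnodup : ∀ a, (Ls a).Nodup := fun a =>
    (hdisj a).imp_of_mem fun {L _} hL _ hdis => by
      rintro rfl
      exact (hne a L hL).ne_empty (disjoint_self.1 hdis)
  refine ((List.finite_length_le _ (Fintype.card (Finset (Fin n)))).image
    fun l => (l.map (gossipMatrix n)).prod).subset ?_
  rintro _ ⟨a, rfl⟩
  exact ⟨Ls a, (hnodup a).length_le_card, rfl⟩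

theorem backProd_window_dotProduct_lt {Ls : ℕ → List (Finset (Fin n))}
    {P : ℕ → Matrix (Fin n) (Fin n) ℝ} (hP : ∀ t, P t = ((Ls t).map (gossipMatrix n)).prod)
    {t T : ℕ} (hconn : (⨆ s ∈ Finset.Ico t (t + T), inducedGraph (Ls s)).Connected)
    {x : Fin n → ℝ} (hsum : ∑ i, x i = 0) (hx : x ≠ 0) :
    (backProd (fun i => P (t + i)) T *ᵥ x) ⬝ᵥ (backProd (fun i => P (t + i)) T *ᵥ x) <
      x ⬝ᵥ x := by
  have hpara : ∀ s, P s ∈ paracontractions (Fin n) := fun s =>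
    hP s ▸ (list_prod_gossipMatrix_mem (Ls s)).1
  refine ((backProd_mem fun i _ => hpara (t + i)) x).2 fun hfix => hx ?_
  rw [backProd_mulVec_eq_self_iff fun i _ => hpara (t + i)] at hfix
  have hconst : ∀ s ∈ Finset.Ico t (t + T), ∀ L ∈ Ls s, ∀ j ∈ L, ∀ k ∈ L, x j = x k := by
    intro s hs
    have := hfix (s - t) (by simp at hs; omega)
    rwa [hP, Nat.add_sub_cancel' (Finset.mem_Ico.1 hs).1,
      list_prod_gossipMatrix_mulVec_eq_self_iff] at this
  refine eq_zero_of_sum_eq_zero_of_forall_eq hsum (hconn.preconnected.apply_eq_of_forall_adj ?_)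
  simp only [SimpleGraph.iSup_adj, inducedGraph, SimpleGraph.fromRel_adj]
  rintro i j ⟨s, hs, -, ⟨L, hL, hi, hj⟩ | ⟨L, hL, hj, hi⟩⟩
  · exact hconst s hs L hL i hi j hj
  · exact hconst s hs L hL j hj i hi |>.symm

end GossipProducts

theorem norm_backProd_mulVec_le {n : ℕ} {P : ℕ → Matrix (Fin n) (Fin n) ℝ}
    (hP : ∀ t, P t ∈ paracontractions (Fin n) ⊓ doublyStochastic ℝ (Fin n)) {T : ℕ} (hT : 0 < T)
    {c : ℝ} (hc0 : 0 < c) (hc1 : c < 1)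
    (hc : ∀ t, ∀ x : Fin n → ℝ, ∑ i, x i = 0 →
      (backProd (fun i => P (t + i)) T *ᵥ x) ⬝ᵥ (backProd (fun i => P (t + i)) T *ᵥ x) ≤
        c * (x ⬝ᵥ x))
    {y : Fin n → ℝ} (hy : ∑ i, y i = 0) (t : ℕ) :
    ‖backProd P t *ᵥ y‖ ≤ √(y ⬝ᵥ y) / √c * (√c ^ (T : ℝ)⁻¹) ^ t := by
  set u : ℕ → ℝ := fun s => √((backProd P s *ᵥ y) ⬝ᵥ (backProd P s *ᵥ y))
  have hanti : Antitone u := antitone_nat_of_succ_le fun s => by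
    simp only [u, backProd, ← mulVec_mulVec]
    exact Real.sqrt_le_sqrt (((hP s).1 _).1)
  have hper : ∀ s, u (s + T) ≤ √c * u s := fun s => by
    have hsum : ∑ i, (backProd P s *ᵥ y) i = 0 := by
      rw [sum_mulVec_of_mem_doublyStochastic (backProd_mem fun i _ => (hP i).2), hy]
    simp only [u, backProd_add, ← mulVec_mulVec, ← Real.sqrt_mul hc0.le]
    exact Real.sqrt_le_sqrt (hc s _ hsum)
  calc ‖backProd P t *ᵥ y‖ ≤ u t := norm_le_sqrt_dotProduct_self _
    _ ≤ u 0 / √c * (√c ^ (T : ℝ)⁻¹) ^ t :=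
      le_geometric_of_antitone_of_le_mul hanti (Real.sqrt_nonneg _) hT (by positivity)
        (Real.sqrt_le_one.2 hc1.le) hper t
    _ = √(y ⬝ᵥ y) / √c * (√c ^ (T : ℝ)⁻¹) ^ t := by simp [u, backProd]

theorem repetitively_complete_gossip_converges_general {n : ℕ}
    (A : SimpleGraph (Fin n))
    (T : ℕ) (hT : 0 < T)
    (Ls : ℕ → List (Finset (Fin n)))
    (hnbhd : ∀ t : ℕ, ∀ L ∈ Ls t, IsNeighborhood A L)
    (hdisj : ∀ t : ℕ, (Ls t).Pairwise (fun L L' => Disjoint L L'))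
    (P : ℕ → Matrix (Fin n) (Fin n) ℝ)
    (hP : ∀ t : ℕ, P t = ((Ls t).map (gossipMatrix n)).prod)
    (hcomplete : ∀ t : ℕ,
      (⨆ s ∈ Finset.Ico t (t + T), inducedGraph (Ls s)).Connected) :
    ∃ lam : ℝ, 0 ≤ lam ∧ lam < 1 ∧
      ∀ x₀ : Fin n → ℝ, ∃ C : ℝ,
        ∀ t : ℕ,
          ‖backProd P t *ᵥ x₀ - (fun _ => (∑ i : Fin n, x₀ i) / (n : ℝ))‖ ≤
            C * lam ^ t := by
  have hPmem : ∀ t, P t ∈ paracontractions (Fin n) ⊓ doublyStochastic ℝ (Fin n) := fun t =>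
    hP t ▸ list_prod_gossipMatrix_mem (Ls t)
  have hPfin : (Set.range P).Finite := funext hP ▸ finite_range_list_prod_gossipMatrix Ls
    (fun t L hL => Finset.card_pos.1 (zero_lt_two.trans_le (hnbhd t L hL).1)) hdisj
  have hWfin : (Set.range fun t => backProd (fun i => P (t + i)) T).Finite :=
    (hPfin.pow T).subset <| Set.range_subset_iff.2 fun t =>
      backProd_mem_pow fun i _ => ⟨t + i, rfl⟩
  obtain ⟨c, hc0, hc1, hc⟩ := exists_forall_dotProduct_mulVec_le_mul hWfin
    (LinearMap.ker (dotProductBilin ℝ ℝ 1)) fun t x hx hx0 =>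
      backProd_window_dotProduct_lt hP (hcomplete t) (by simpa [one_dotProduct] using hx) hx0
  refine ⟨√c ^ (T : ℝ)⁻¹, by positivity,
    Real.rpow_lt_one (Real.sqrt_nonneg c) (by simpa using Real.sqrt_lt_sqrt hc0.le hc1)
      (by positivity), fun x₀ => ?_⟩
  set y : Fin n → ℝ := x₀ - fun _ => (∑ i, x₀ i) / (n : ℝ)
  refine ⟨√(y ⬝ᵥ y) / √c, fun t => ?_⟩
  rw [← mulVec_const_of_mem_doublyStochastic (backProd_mem fun i _ => (hPmem i).2), ← mulVec_sub]
  exact norm_backProd_mulVec_le hPmem hT hc0 hc1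
    (fun t x hx => hc t x (by simpa [one_dotProduct] using hx)) (sum_sub_mean_eq_zero x₀) t

/-- Theorem 1 of the paper: if `P 0, P 1, P 2, …` is an infinite sequence of primitive
gossip matrices of the connected graph `A` (each `P t` being the product of the
neighborhood averaging matrices of a pairwise-disjoint list `Ls t` of neighborhoods of
`A`) which is repetitively complete with period `T` (the union over every window of `T`
consecutive steps of the induced graphs is a connected spanning subgraph of `A`), then
there is `0 ≤ λ < 1`, depending only on `T` and the matrices `P t`, such that for every
initial vector `x₀` the products `P_t ⋯ P_1 x₀` converge to `y_avg·𝟙` exponentially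
fast, at the rate `λᵗ`. -/
theorem repetitively_complete_gossip_converges {n : ℕ} (hn : 1 < n)
    (A : SimpleGraph (Fin n)) (hA : A.Connected)
    (T : ℕ) (hT : 0 < T)
    (Ls : ℕ → List (Finset (Fin n)))
    (hnbhd : ∀ t : ℕ, ∀ L ∈ Ls t, IsNeighborhood A L)
    (hdisj : ∀ t : ℕ, (Ls t).Pairwise (fun L L' => Disjoint L L'))
    (P : ℕ → Matrix (Fin n) (Fin n) ℝ)
    (hP : ∀ t : ℕ, P t = ((Ls t).map (gossipMatrix n)).prod)
    (hcomplete : ∀ t : ℕ,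
      (⨆ s ∈ Finset.Ico t (t + T), inducedGraph (Ls s)).Connected) :
    ∃ lam : ℝ, 0 ≤ lam ∧ lam < 1 ∧
      ∀ x₀ : Fin n → ℝ, ∃ C : ℝ,
        ∀ t : ℕ,
          ‖backProd P t *ᵥ x₀ - (fun _ => (∑ i : Fin n, x₀ i) / (n : ℝ))‖ ≤
            C * lam ^ t :=
  repetitively_complete_gossip_converges_general A T hT Ls hnbhd hdisj P hP hcomplete
end

section
/- Let α be a finite nonempty set, let σ : α → α be any function, let x : α → ℝ, and let R = {i ∈ α : x(i) > x(σ(i))} (the set of 'requesters'). If R is nonempty, then there exists i ∈ R such that σ(i) ∉ R; that is, at least one agent that receives a request to gossip does not itself place a request to gossip. -/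
/-- The second combinatorial core of Lemma 1 (deadlock freedom of Protocol II): with `σ i`
the preferred neighbor of agent `i` and `R` the set of requesters (agents `i` with
`x i > x (σ i)`), if `R` is nonempty then some requester's preferred neighbor is not
itself a requester. -/
theorem exists_requester_whose_target_is_not_requester {α : Type*} [Fintype α] [Nonempty α]
    (σ : α → α) (x : α → ℝ) (R : Set α) (hRdef : R = {i : α | x (σ i) < x i})
    (hne : R.Nonempty) : ∃ i ∈ R, σ i ∉ R := by
  by_contra h
  push_neg at h
  obtain ⟨i₀, hi₀⟩ := hne
  set f : ℕ → α := fun n => σ^[n] i₀ with hf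
  have hmem : ∀ n, f n ∈ R := by
    intro n
    induction n with
    | zero => simpa [hf] using hi₀
    | succ n ih =>
      have := h _ ih
      simpa [hf, Function.iterate_succ_apply'] using this
  have hdec : StrictAnti (fun n => x (f n)) := by
    apply strictAnti_nat_of_succ_lt
    intro n
    have := hmem n
    rw [hRdef] at this
    simpa [hf, Function.iterate_succ_apply'] using this
  have hinj : Function.Injective f := fun a b hab => hdec.injective (by simp [hab])
  obtain ⟨a, b, hab, heq⟩ := Finite.exists_ne_map_eq_of_infinite f
  exact hab (hinj heq)
end

section
/- Let A be a simple, undirected, connected graph on vertex set {1,…,n} with n > 1, let E be a set of unordered pairs of distinct elements of {1,…,n}, and let V(x) = Σ_{{i,j}∈E} |x_i − x_j|. If V is an instantaneous indicator with respect to A, then every edge of A belongs to E, i.e., A is a subgraph of G_V. -/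
/-- The multi-distance function of a graph `G` on `{1,…,n}`:
`V(x) = Σ_{{i,j} ∈ E(G)} |x_i − x_j|`. -/
noncomputable def multiDist {n : ℕ} (G : SimpleGraph (Fin n)) [DecidableRel G.Adj]
    (x : Fin n → ℝ) : ℝ :=
  ∑ e ∈ G.edgeFinset,
    Sym2.lift ⟨fun i j => |x i - x j|, fun i j => abs_sub_comm (x i) (x j)⟩ e

/-- `V` is an indicator: `V(x) = 0` forces all entries of `x` to agree. -/
def IsIndicator {n : ℕ} (G : SimpleGraph (Fin n)) [DecidableRel G.Adj] : Prop :=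
  ∀ x : Fin n → ℝ, multiDist G x = 0 → ∀ i j : Fin n, x i = x j

/-- The result of a gossip between agents `i` and `j`: both move to the midpoint
`(x i + x j)/2` while every other agent stays put. -/
noncomputable def gossip {n : ℕ} (x : Fin n → ℝ) (i j : Fin n) : Fin n → ℝ :=
  fun k => if k = i ∨ k = j then (x i + x j) / 2 else x k

/-- `V = multiDist G` is instantaneous with respect to the allowable gossip graph `A`:
there is `λ > 0` such that every allowable gossip decreases `V` by at least
`λ·|x_i − x_j|`. -/
def Instantaneous {n : ℕ} (A : SimpleGraph (Fin n)) (G : SimpleGraph (Fin n))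
    [DecidableRel G.Adj] : Prop :=
  ∃ lam : ℝ, 0 < lam ∧ ∀ i j : Fin n, A.Adj i j → ∀ x : Fin n → ℝ,
    multiDist G (gossip x i j) - multiDist G x ≤ -(lam * |x i - x j|)

/-- Witness configuration: `i` at `a`, `j` at `b`, everyone else at `3`. -/
noncomputable def wit {n : ℕ} (i j : Fin n) (a b : ℝ) : Fin n → ℝ :=
  fun k => if k = i then a else if k = j then b else 3

/-- If `V` is an instantaneous indicator with respect to the connected allowable gossip
graph `A`, then every edge of `A` is an edge of `G_V`, i.e. `A` is a subgraph of `G_V`. -/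
theorem instantaneous_indicator_subgraph {n : ℕ} (hn : 1 < n)
    (A : SimpleGraph (Fin n)) (hA : A.Connected)
    (G : SimpleGraph (Fin n)) [DecidableRel G.Adj]
    (hind : IsIndicator G) (hinst : Instantaneous A G) :
    A ≤ G := by
  intro i j hij
  by_contra hne
  obtain ⟨lam, hlam, hbound⟩ := hinst
  have hijne : i ≠ j := hij.ne
  set x : Fin n → ℝ := wit i j 1 (-1) with hx
  set y : Fin n → ℝ := wit i j (-1) 1 with hy
  have hxi : x i = 1 := by simp [hx, wit]
  have hxj : x j = -1 := by simp [hx, wit, hijne.symm]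
  have hyi : y i = -1 := by simp [hy, wit]
  have hyj : y j = 1 := by simp [hy, wit, hijne.symm]
  have hgossip : gossip x i j = gossip y i j := by
    funext k
    simp only [gossip, hxi, hxj, hyi, hyj]
    by_cases hk : k = i ∨ k = j
    · simp [hk]
    · push_neg at hk
      simp [hk.1, hk.2, hx, hy, wit]
  have hsum : multiDist G x + multiDist G y = 2 * multiDist G (gossip x i j) := by
    unfold multiDist
    rw [← Finset.sum_add_distrib, Finset.mul_sum]
    apply Finset.sum_congr rfl
    intro e he
    induction e using Sym2.ind with
    | _ a b =>
      have hab : G.Adj a b := by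
        rwa [SimpleGraph.mem_edgeFinset, SimpleGraph.mem_edgeSet] at he
      have habne : a ≠ b := hab.ne
      simp only [Sym2.lift_mk]
      have key : ∀ c : Fin n, c ≠ i → c ≠ j →
          x c = 3 ∧ y c = 3 ∧ gossip x i j c = 3 := by
        intro c hci hcj
        refine ⟨?_, ?_, ?_⟩ <;> simp [hx, hy, wit, gossip, hci, hcj]
      have hgi : gossip x i j i = 0 := by simp [gossip, hxi, hxj]
      have hgj : gossip x i j j = 0 := by simp [gossip, hxi, hxj]
      by_cases hai : a = i
      · subst hai
        by_cases hbj : b = j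
        · subst hbj; exact absurd hab hne
        · obtain ⟨h1, h2, h3⟩ := key b hab.ne' hbj
          rw [hxi, hyi, hgi, h1, h2, h3]; norm_num
      · by_cases haj : a = j
        · subst haj
          by_cases hbi : b = i
          · subst hbi; exact absurd hab.symm hne
          · obtain ⟨h1, h2, h3⟩ := key b hbi habne.symm
            rw [hxj, hyj, hgj, h1, h2, h3]; norm_num
        · obtain ⟨h1, h2, h3⟩ := key a hai haj
          by_cases hbi : b = i
          · subst hbi
            rw [hxi, hyi, hgi, h1, h2, h3]; norm_num
          · by_cases hbj : b = j
            · subst hbj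
              rw [hxj, hyj, hgj, h1, h2, h3]; norm_num
            · obtain ⟨h1', h2', h3'⟩ := key b hbi hbj
              rw [h1, h2, h3, h1', h2', h3']; norm_num
  have h1 := hbound i j hij x
  have h2 := hbound i j hij y
  rw [hxi, hxj] at h1
  rw [hyi, hyj] at h2
  rw [hgossip] at h1
  have habs : |(1 : ℝ) - (-1)| = 2 := by norm_num
  have habs' : |(-1 : ℝ) - 1| = 2 := by norm_num
  rw [habs] at h1
  rw [habs'] at h2
  rw [hgossip] at hsum
  nlinarith [hlam]
end

section
/- Let n > 1 and let V(x) = Σ_{1 ≤ i < j ≤ n} |x_i − x_j| be the sum of pairwise distances over all pairs of distinct indices. Then for any x ∈ ℝⁿ and any distinct indices i and j, letting x′ be the result of the gossip between i and j applied to x (x′_i = x′_j = (x_i + x_j)/2 and x′_k = x_k for k ∉ {i,j}), one has V(x′) ≤ V(x) − |x_i − x_j|. -/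
/-- The sum of all pairwise distances `V(x) = Σ_{i<j} |x_i − x_j|`. -/
noncomputable def totalDist {n : ℕ} (x : Fin n → ℝ) : ℝ :=
  ∑ p ∈ Finset.univ.filter (fun p : Fin n × Fin n => p.1 < p.2), |x p.1 - x p.2|

lemma key_mid (a b c : ℝ) : 2 * |(a + b) / 2 - c| ≤ |a - c| + |b - c| := by
  have h : (a + b) / 2 - c = (a - c + (b - c)) / 2 := by ring
  rw [h, abs_div, abs_two]
  calc 2 * (|a - c + (b - c)| / 2) = |a - c + (b - c)| := by ring
    _ ≤ _ := abs_add_le _ _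

lemma totalDist_double {n : ℕ} (x : Fin n → ℝ) :
    2 * totalDist x = ∑ a, ∑ b, |x a - x b| := by
  classical
  rw [← Finset.sum_product']
  have hswap : ∑ p ∈ Finset.univ.filter (fun p : Fin n × Fin n => p.1 < p.2), |x p.1 - x p.2|
      = ∑ p ∈ Finset.univ.filter (fun p : Fin n × Fin n => p.2 < p.1), |x p.1 - x p.2| := by
    apply Finset.sum_nbij' (fun p => Prod.swap p) (fun p => Prod.swap p) <;>
      simp [abs_sub_comm]
  have hsub : ∑ p ∈ Finset.univ.filter (fun p : Fin n × Fin n => ¬ p.1 < p.2), |x p.1 - x p.2|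
      = ∑ p ∈ Finset.univ.filter (fun p : Fin n × Fin n => p.2 < p.1), |x p.1 - x p.2| := by
    symm
    apply Finset.sum_subset
    · intro p hp
      simp only [Finset.mem_filter, Finset.mem_univ, true_and] at hp ⊢
      exact not_lt_of_gt hp
    · intro p hp hnp
      simp only [Finset.mem_filter, Finset.mem_univ, true_and, not_lt] at hp hnp
      have : p.1 = p.2 := le_antisymm hnp hp
      rw [this]; simp
  have := Finset.sum_filter_add_sum_filter_not (Finset.univ : Finset (Fin n × Fin n))
    (fun p => p.1 < p.2) (fun p => |x p.1 - x p.2|)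
  rw [hsub, ← hswap] at this
  have huniv : ∑ p ∈ (Finset.univ : Finset (Fin n)) ×ˢ Finset.univ, |x p.1 - x p.2|
      = ∑ p ∈ (Finset.univ : Finset (Fin n × Fin n)), |x p.1 - x p.2| := by
    rw [Finset.univ_product_univ]
  rw [huniv, ← this, totalDist]; ring

/-- For the instantaneous indicator given by the complete graph, every gossip between
distinct agents `i` and `j` decreases the indicator by at least `|x_i − x_j|`. -/
theorem totalDist_gossip_le {n : ℕ} (hn : 1 < n) (x : Fin n → ℝ) (i j : Fin n)
    (hij : i ≠ j) :
    totalDist (gossip x i j) ≤ totalDist x - |x i - x j| := by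
  classical
  set x' := gossip x i j with hx'
  set m := (x i + x j) / 2 with hm
  set s := ((Finset.univ : Finset (Fin n)).erase i).erase j with hs
  have hji : j ∈ (Finset.univ : Finset (Fin n)).erase i := by
    simp [Finset.mem_erase, hij.symm]
  have hdecomp : ∀ f : Fin n → ℝ, ∑ a, f a = f i + f j + ∑ a ∈ s, f a := by
    intro f
    rw [← Finset.add_sum_erase _ f (Finset.mem_univ i), ← Finset.add_sum_erase _ f hji, hs]
    ring
  have hmem : ∀ k ∈ s, k ≠ i ∧ k ≠ j := by
    intro k hk
    simp only [hs, Finset.mem_erase] at hk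
    exact ⟨hk.2.1, hk.1⟩
  have hgi : x' i = m := by simp [hx', gossip, hm]
  have hgj : x' j = m := by simp [hx', gossip, hm]
  have hgk : ∀ k ∈ s, x' k = x k := by
    intro k hk
    obtain ⟨h1, h2⟩ := hmem k hk
    simp [hx', gossip, h1, h2]
  -- The two double sums, decomposed
  have hD' : (∑ a, ∑ b, |x' a - x' b|)
      = 2 * ∑ b ∈ s, |m - x b| + ∑ a ∈ s, (2 * |x a - m| + ∑ b ∈ s, |x a - x b|) := by
    rw [hdecomp (fun a => ∑ b, |x' a - x' b|)]
    rw [hdecomp (fun b => |x' i - x' b|), hdecomp (fun b => |x' j - x' b|)]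
    have hi' : ∑ b ∈ s, |x' i - x' b| = ∑ b ∈ s, |m - x b| := by
      apply Finset.sum_congr rfl
      intro b hb; rw [hgi, hgk b hb]
    have hj' : ∑ b ∈ s, |x' j - x' b| = ∑ b ∈ s, |m - x b| := by
      apply Finset.sum_congr rfl
      intro b hb; rw [hgj, hgk b hb]
    have ha' : ∑ a ∈ s, (∑ b, |x' a - x' b|)
        = ∑ a ∈ s, (2 * |x a - m| + ∑ b ∈ s, |x a - x b|) := by
      apply Finset.sum_congr rfl
      intro a ha
      rw [hdecomp (fun b => |x' a - x' b|), hgi, hgj, hgk a ha]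
      have : ∑ b ∈ s, |x a - x' b| = ∑ b ∈ s, |x a - x b| := by
        apply Finset.sum_congr rfl
        intro b hb; rw [hgk b hb]
      rw [this]; ring
    rw [hi', hj', ha', hgi, hgj]
    simp only [sub_self, abs_zero]
    ring
  have hD : (∑ a, ∑ b, |x a - x b|)
      = 2 * |x i - x j| + ∑ b ∈ s, (|x i - x b| + |x j - x b|)
        + ∑ a ∈ s, (|x a - x i| + |x a - x j| + ∑ b ∈ s, |x a - x b|) := by
    rw [hdecomp (fun a => ∑ b, |x a - x b|)]
    rw [hdecomp (fun b => |x i - x b|), hdecomp (fun b => |x j - x b|)]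
    have ha' : ∑ a ∈ s, (∑ b, |x a - x b|)
        = ∑ a ∈ s, (|x a - x i| + |x a - x j| + ∑ b ∈ s, |x a - x b|) := by
      apply Finset.sum_congr rfl
      intro a ha
      rw [hdecomp (fun b => |x a - x b|)]
    rw [ha', abs_sub_comm (x j) (x i)]
    have hsplit : ∑ b ∈ s, (|x i - x b| + |x j - x b|)
        = ∑ b ∈ s, |x i - x b| + ∑ b ∈ s, |x j - x b| := Finset.sum_add_distrib
    simp only [sub_self, abs_zero]
    linarith
  -- key inequalities
  have h1 : 2 * ∑ b ∈ s, |m - x b| ≤ ∑ b ∈ s, (|x i - x b| + |x j - x b|) := by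
    rw [Finset.mul_sum]
    apply Finset.sum_le_sum
    intro b _
    exact key_mid (x i) (x j) (x b)
  have h2 : ∑ a ∈ s, (2 * |x a - m| + ∑ b ∈ s, |x a - x b|)
      ≤ ∑ a ∈ s, (|x a - x i| + |x a - x j| + ∑ b ∈ s, |x a - x b|) := by
    apply Finset.sum_le_sum
    intro a _
    have := key_mid (x i) (x j) (x a)
    rw [abs_sub_comm (x a) m, abs_sub_comm (x a) (x i), abs_sub_comm (x a) (x j)]
    linarith
  have hdx' := totalDist_double x'
  have hdx := totalDist_double x
  rw [hD'] at hdx'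
  rw [hD] at hdx
  linarith
end
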